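/- Let Γ_θ be a well-rounded sublattice of Λ_h with index b and minimum c where gcd(b, c) = 1, and suppose Ω = αAΓ_θ is a sublattice of Λ_h similar to Γ_θ (α ∈ ℝ \ {0}, A a 2×2 real orthogonal matrix). Then α² is a positive integer; in particular the minimum of Ω is at least the minimum of Γ_θ. -/
import Mathlib


theorem stmt_12 (b c : ℤ) (hb : 0 < b) (hc : 0 < c) (hbc : Int.gcd b c = 1)
    (α : ℝ) (hα : α ≠ 0)
    (hmin : ∃ M : ℤ, 0 < M ∧ (M : ℝ) = α ^ 2 * c)
    (hidx : ∃ J : ℤ, 0 < J ∧ (J : ℝ) = α ^ 2 * b) :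
    (∃ k : ℤ, 0 < k ∧ (α ^ 2 : ℝ) = k) ∧ (c : ℝ) ≤ α ^ 2 * c := by
  obtain ⟨M, hM, hMe⟩ := hmin
  obtain ⟨J, hJ, hJe⟩ := hidx
  have hcb : IsCoprime (c : ℤ) b :=
    Int.isCoprime_iff_gcd_eq_one.mpr (by rwa [Int.gcd_comm])
  have h1 : (M * b : ℤ) = J * c := by
    have h : ((M * b : ℤ) : ℝ) = ((J * c : ℤ) : ℝ) := by
      push_cast; rw [hMe, hJe]; ring
    exact_mod_cast h
  have hdvd : c ∣ M := hcb.dvd_of_dvd_mul_right ⟨J, by linarith⟩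
  obtain ⟨k, hk⟩ := hdvd
  have hk0 : 0 < k := by nlinarith [hk ▸ hM]
  have hcR : (c : ℝ) ≠ 0 := by positivity
  have hMk : (M : ℝ) = (c : ℝ) * k := by exact_mod_cast hk
  have hα2 : (α ^ 2 : ℝ) = k := by
    have : α ^ 2 * c = (k : ℝ) * c := by rw [← hMe, hMk]; ring
    exact mul_right_cancel₀ hcR this
  refine ⟨⟨k, hk0, hα2⟩, ?_⟩
  have hk1 : (1 : ℝ) ≤ k := by exact_mod_cast hk0
  rw [hα2]
  nlinarith [hk1, show (0:ℝ) < c from by exact_mod_cast hc]
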